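/- arXiv:2306.03070 — 4 statements merged into one kernel-verified Lean document; each statement's English description precedes it below -/
import Mathlib

section
/- Let f: X → Y be a proper surjective map between connected topological spaces such that every fiber of f is connected, let p: Ỹ → Y be the universal covering, and let X' = X ×_Y Ỹ be the fiber product. Then X' is connected. -/
open Set Topology Filter

/-- Let `f : X → Y` be a proper surjective continuous map between connected spaces with
connected fibers, and let `p : Ỹ → Y` be the universal covering (a covering map with simply
connected total space).  Then the fiber product `X ×_Y Ỹ` is connected. -/
theorem stmt3 {X Y Yt : Type*} [TopologicalSpace X] [TopologicalSpace Y]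
    [TopologicalSpace Yt]
    [ConnectedSpace X] [ConnectedSpace Y]
    [LocallyPathConnectedSpace X] [LocallyPathConnectedSpace Y]
    [ConnectedSpace Yt] [SimplyConnectedSpace Yt]
    (f : X → Y) (hf : Continuous f) (hprop : IsProperMap f)
    (hsurj : Function.Surjective f)
    (hfib : ∀ y : Y, IsConnected (f ⁻¹' {y}))
    (p : Yt → Y) (hp : IsCoveringMap p) :
    ConnectedSpace {q : X × Yt // f q.1 = p q.2} := by
  set X' := {q : X × Yt // f q.1 = p q.2}
  set π : X' → Yt := fun q => q.1.2 with hπ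
  have hπc : Continuous π := (continuous_snd.comp continuous_subtype_val)
  -- π is surjective
  have hπsurj : Function.Surjective π := by
    intro yt
    obtain ⟨x, hx⟩ := hsurj (p yt)
    exact ⟨⟨(x, yt), hx⟩, rfl⟩
  -- π is proper (pullback of proper along p), hence closed
  have hπprop : IsProperMap π := by
    rw [isProperMap_iff_ultrafilter]
    refine ⟨hπc, fun 𝒰 yt hy => ?_⟩
    have h1 : Tendsto (fun q : X' => f q.1.1) 𝒰 (𝓝 (p yt)) := by
      have : (fun q : X' => f q.1.1) = p ∘ π := by
        funext q; exact q.2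
      rw [this]
      exact (hp.continuous.tendsto yt).comp hy
    obtain ⟨x, hfx, hx⟩ := hprop.ultrafilter_le_nhds_of_tendsto
      (𝒰 := 𝒰.map (fun q : X' => q.1.1)) (by exact h1)
    refine ⟨⟨(x, yt), hfx⟩, rfl, ?_⟩
    have : Tendsto (Subtype.val : X' → X × Yt) 𝒰 (𝓝 (x, yt)) := by
      rw [nhds_prod_eq]
      exact Filter.Tendsto.prodMk hx hy
    rw [(show IsInducing (Subtype.val : X' → X × Yt) from ⟨rfl⟩).nhds_eq_comap]
    exact Filter.map_le_iff_le_comap.mp this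
  have hπq : Topology.IsQuotientMap π :=
    hπprop.isClosedMap.isQuotientMap hπc hπsurj
  -- fibers of π are connected
  have hπfib : ∀ yt : Yt, IsConnected (π ⁻¹' {yt}) := by
    intro yt
    have himg : (Subtype.val : X' → X × Yt) '' (π ⁻¹' {yt})
        = (fun x => (x, yt)) '' (f ⁻¹' {p yt}) := by
      ext q
      constructor
      · rintro ⟨⟨⟨x, y⟩, hq⟩, hmem, rfl⟩
        simp only [mem_preimage, mem_singleton_iff, hπ] at hmem
        subst hmem
        exact ⟨x, hq, rfl⟩
      · rintro ⟨x, hx, rfl⟩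
        exact ⟨⟨(x, yt), hx⟩, rfl, rfl⟩
    constructor
    · obtain ⟨x, hx⟩ := (hfib (p yt)).nonempty
      exact ⟨⟨(x, yt), hx⟩, rfl⟩
    · rw [← (show IsInducing (Subtype.val : X' → X × Yt) from ⟨rfl⟩).isPreconnected_image]
      have h2 : IsPreconnected ((fun x => (x, yt)) '' (f ⁻¹' {p yt})) :=
        ((hfib (p yt)).image _
          (Continuous.continuousOn (by continuity))).isPreconnected
      rwa [← himg] at h2
  -- conclude
  obtain ⟨a, -⟩ := hπsurj (Classical.arbitrary Yt)
  rw [connectedSpace_iff_connectedComponent]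
  refine ⟨a, ?_⟩
  have := hπq.preimage_connectedComponent hπfib a
  rw [← this]
  have : connectedComponent (π a) = univ :=
    PreconnectedSpace.connectedComponent_eq_univ (π a)
  rw [this, preimage_univ]
end

section
/- Let Γ be a finitely generated group, K an algebraically closed field, and M the set of kernels of reductive (semisimple) representations ρ: Γ → GL_N(K) as N ranges over all positive integers. Then M is countable. -/
/-- A finite-dimensional matrix representation is reductive (a direct sum of irreducibles)
iff every invariant subspace admits an invariant complement. -/
def RepIsReductive {k : Type*} [Field k] {Γ : Type*} [Group Γ] {N : ℕ}
    (ρ : Γ →* GL (Fin N) k) : Prop :=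
  ∀ W : Submodule k (Fin N → k),
    (∀ γ : Γ, W.map (Matrix.toLin' ((ρ γ : Matrix (Fin N) (Fin N) k))) ≤ W) →
    ∃ W' : Submodule k (Fin N → k), IsCompl W W' ∧
      ∀ γ : Γ, W'.map (Matrix.toLin' ((ρ γ : Matrix (Fin N) (Fin N) k))) ≤ W'

/-- A countable Noetherian (commutative) ring has countably many ideals. -/
lemma countable_ideals_aux {R : Type*} [CommRing R] [IsNoetherianRing R] [Countable R] :
    Countable (Ideal R) := by
  have hsurj : Function.Surjective (fun s : Finset R => Ideal.span (s : Set R)) := by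
    intro I
    obtain ⟨s, hs⟩ := IsNoetherian.noetherian I
    exact ⟨s, hs⟩
  exact hsurj.countable

/-- The entries of the images (and inverse images) of a marked set of elements. -/
def entRep {Γ : Type*} [Group Γ] {K : Type*} [Field K] {N : ℕ} (S : Set Γ)
    (ρ : Γ →* GL (Fin N) K) : ↥S × Bool × Fin N × Fin N → K :=
  fun v => if v.2.1 then (((ρ ↑v.1)⁻¹ : GL (Fin N) K) : Matrix (Fin N) (Fin N) K) v.2.2.1 v.2.2.2
    else ((ρ ↑v.1 : GL (Fin N) K) : Matrix (Fin N) (Fin N) K) v.2.2.1 v.2.2.2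

/-- Evaluation of integer polynomials at the entries of a representation. -/
def evRep {Γ : Type*} [Group Γ] {K : Type*} [Field K] {N : ℕ} (S : Set Γ)
    (ρ : Γ →* GL (Fin N) K) :
    MvPolynomial (↥S × Bool × Fin N × Fin N) ℤ →+* K :=
  MvPolynomial.eval₂Hom (Int.castRingHom K) (entRep S ρ)

lemma kernel_eq_of_ideal_eq {Γ : Type*} [Group Γ] {K : Type*} [Field K] {N : ℕ}
    {S : Set Γ} (hS : Subgroup.closure S = ⊤)
    (ρ ρ' : Γ →* GL (Fin N) K)
    (hJ : RingHom.ker (evRep S ρ) = RingHom.ker (evRep S ρ')) :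
    MonoidHom.ker ρ = MonoidHom.ker ρ' := by
  set R := MvPolynomial (↥S × Bool × Fin N × Fin N) ℤ with hR
  set J := RingHom.ker (evRep S ρ) with hJdef
  -- two injections of the quotient into K
  let ι : R ⧸ J →+* K := RingHom.kerLift (evRep S ρ)
  have hι : Function.Injective ι := RingHom.kerLift_injective _
  have hιmk : ∀ p : R, ι (Ideal.Quotient.mk J p) = evRep S ρ p := fun p =>
    RingHom.kerLift_mk (evRep S ρ) p
  let ι' : R ⧸ J →+* K := Ideal.Quotient.lift J (evRep S ρ')
    (fun a ha => by
      have : a ∈ RingHom.ker (evRep S ρ') := hJ ▸ ha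
      exact this)
  have hι'mk : ∀ p : R, ι' (Ideal.Quotient.mk J p) = evRep S ρ' p := fun p =>
    Ideal.Quotient.lift_mk J _ _
  have hι' : Function.Injective ι' := by
    intro a b hab
    obtain ⟨r, rfl⟩ := Ideal.Quotient.mk_surjective a
    obtain ⟨t, rfl⟩ := Ideal.Quotient.mk_surjective b
    rw [hι'mk, hι'mk] at hab
    have hmem : r - t ∈ RingHom.ker (evRep S ρ') := by
      rw [RingHom.mem_ker, map_sub, hab, sub_self]
    rw [← hJ] at hmem
    exact (Ideal.Quotient.mk_eq_mk_iff_sub_mem r t).mpr hmem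
  -- matrix ring maps
  let Ψ : Matrix (Fin N) (Fin N) (R ⧸ J) →+* Matrix (Fin N) (Fin N) K := ι.mapMatrix
  let Ψ' : Matrix (Fin N) (Fin N) (R ⧸ J) →+* Matrix (Fin N) (Fin N) K := ι'.mapMatrix
  have hΨ : Function.Injective Ψ := by
    intro a b h
    ext i j
    have := congrArg (fun M : Matrix (Fin N) (Fin N) K => M i j) h
    simp only [Ψ, RingHom.mapMatrix_apply, Matrix.map_apply] at this
    exact hι this
  have hΨ' : Function.Injective Ψ' := by
    intro a b h
    ext i j
    have := congrArg (fun M : Matrix (Fin N) (Fin N) K => M i j) h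
    simp only [Ψ', RingHom.mapMatrix_apply, Matrix.map_apply] at this
    exact hι' this
  -- generic matrices
  let x : ↥S → Matrix (Fin N) (Fin N) (R ⧸ J) := fun s =>
    Matrix.of fun i j => Ideal.Quotient.mk J (MvPolynomial.X (s, false, i, j))
  let y : ↥S → Matrix (Fin N) (Fin N) (R ⧸ J) := fun s =>
    Matrix.of fun i j => Ideal.Quotient.mk J (MvPolynomial.X (s, true, i, j))
  have hΨx : ∀ s, Ψ (x s) = ((ρ ↑s : GL (Fin N) K) : Matrix (Fin N) (Fin N) K) := by
    intro s
    ext i j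
    simp only [Ψ, x, RingHom.mapMatrix_apply, Matrix.map_apply, Matrix.of_apply, hιmk]
    simp [evRep, entRep]
  have hΨy : ∀ s, Ψ (y s) = (((ρ ↑s)⁻¹ : GL (Fin N) K) : Matrix (Fin N) (Fin N) K) := by
    intro s
    ext i j
    simp only [Ψ, y, RingHom.mapMatrix_apply, Matrix.map_apply, Matrix.of_apply, hιmk]
    simp [evRep, entRep]
  have hΨ'x : ∀ s, Ψ' (x s) = ((ρ' ↑s : GL (Fin N) K) : Matrix (Fin N) (Fin N) K) := by
    intro s
    ext i j
    simp only [Ψ', x, RingHom.mapMatrix_apply, Matrix.map_apply, Matrix.of_apply, hι'mk]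
    simp [evRep, entRep]
  have hΨ'y : ∀ s, Ψ' (y s) = (((ρ' ↑s)⁻¹ : GL (Fin N) K) : Matrix (Fin N) (Fin N) K) := by
    intro s
    ext i j
    simp only [Ψ', y, RingHom.mapMatrix_apply, Matrix.map_apply, Matrix.of_apply, hι'mk]
    simp [evRep, entRep]
  have hxy : ∀ s, x s * y s = 1 := by
    intro s
    apply hΨ
    rw [map_mul, map_one, hΨx, hΨy]
    exact Units.mul_inv _
  have hyx : ∀ s, y s * x s = 1 := by
    intro s
    apply hΨ
    rw [map_mul, map_one, hΨy, hΨx]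
    exact Units.inv_mul _
  -- witnesses
  have wit : ∀ γ : Γ, ∃ m : GL (Fin N) (R ⧸ J),
      Units.map Ψ.toMonoidHom m = ρ γ ∧ Units.map Ψ'.toMonoidHom m = ρ' γ := by
    intro γ
    have hγ : γ ∈ Subgroup.closure S := hS ▸ Subgroup.mem_top γ
    refine Subgroup.closure_induction ?_ ?_ ?_ ?_ hγ
    · intro s hs
      refine ⟨⟨x ⟨s, hs⟩, y ⟨s, hs⟩, hxy _, hyx _⟩, Units.ext ?_, Units.ext ?_⟩
      · simpa [Units.coe_map] using hΨx ⟨s, hs⟩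
      · simpa [Units.coe_map] using hΨ'x ⟨s, hs⟩
    · exact ⟨1, by simp, by simp⟩
    · rintro a b _ _ ⟨ma, ha1, ha2⟩ ⟨mb, hb1, hb2⟩
      exact ⟨ma * mb, by rw [map_mul, ha1, hb1, map_mul],
        by rw [map_mul, ha2, hb2, map_mul]⟩
    · rintro a _ ⟨ma, ha1, ha2⟩
      exact ⟨ma⁻¹, by rw [map_inv, ha1, map_inv], by rw [map_inv, ha2, map_inv]⟩
  ext γ
  obtain ⟨m, h1, h2⟩ := wit γ
  simp only [MonoidHom.mem_ker]
  have c1 : ρ γ = 1 ↔ (m : Matrix (Fin N) (Fin N) (R ⧸ J)) = 1 := by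
    rw [← h1]
    constructor
    · intro h
      apply hΨ
      rw [map_one]
      simpa [Units.coe_map] using congrArg Units.val h
    · intro h
      apply Units.ext
      simp [Units.coe_map, h]
  have c2 : ρ' γ = 1 ↔ (m : Matrix (Fin N) (Fin N) (R ⧸ J)) = 1 := by
    rw [← h2]
    constructor
    · intro h
      apply hΨ'
      rw [map_one]
      simpa [Units.coe_map] using congrArg Units.val h
    · intro h
      apply Units.ext
      simp [Units.coe_map, h]
  rw [c1, c2]

/-- For a finitely generated group `Γ` and an algebraically closed field `K`, the set of
kernels of reductive representations `ρ : Γ → GL_N(K)`, as `N` ranges over all positive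
integers, is countable. -/
theorem stmt4 {Γ : Type*} [Group Γ] (hΓ : Group.FG Γ)
    (K : Type*) [Field K] [IsAlgClosed K] :
    Set.Countable {H : Subgroup Γ | ∃ N : ℕ, 0 < N ∧
      ∃ ρ : Γ →* GL (Fin N) K, RepIsReductive ρ ∧ MonoidHom.ker ρ = H} := by
  obtain ⟨S, hSclos, hSfin⟩ := Group.fg_iff.mp hΓ
  haveI : Finite ↥S := hSfin.to_subtype
  have key : ∀ N : ℕ,
      Set.Countable {H : Subgroup Γ | ∃ ρ : Γ →* GL (Fin N) K, MonoidHom.ker ρ = H} := by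
    intro N
    haveI : Countable (MvPolynomial (↥S × Bool × Fin N × Fin N) ℤ) :=
      (AddMonoidAlgebra.coeff_injective (R := ℤ) (M := (↥S × Bool × Fin N × Fin N) →₀ ℕ)).countable
    haveI : Countable (Ideal (MvPolynomial (↥S × Bool × Fin N × Fin N) ℤ)) :=
      countable_ideals_aux
    rw [← Set.countable_coe_iff]
    have hinj : Function.Injective
        (fun H : {H : Subgroup Γ | ∃ ρ : Γ →* GL (Fin N) K, MonoidHom.ker ρ = H} =>
          RingHom.ker (evRep S (Classical.choose H.2))) := by
      intro H1 H2 h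
      have e1 := Classical.choose_spec H1.2
      have e2 := Classical.choose_spec H2.2
      apply Subtype.ext
      rw [← e1, ← e2]
      exact kernel_eq_of_ideal_eq hSclos _ _ h
    exact hinj.countable
  have hsub : {H : Subgroup Γ | ∃ N : ℕ, 0 < N ∧
      ∃ ρ : Γ →* GL (Fin N) K, RepIsReductive ρ ∧ MonoidHom.ker ρ = H} ⊆
      ⋃ N : ℕ, {H : Subgroup Γ | ∃ ρ : Γ →* GL (Fin N) K, MonoidHom.ker ρ = H} := by
    rintro H ⟨N, -, ρ, -, hker⟩
    exact Set.mem_iUnion.mpr ⟨N, ρ, hker⟩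
  exact Set.Countable.mono hsub (Set.countable_iUnion key)
end

section
/- Let A = (a₁, …, a_n) ∈ M_{m,n}(ℤ) be an integer matrix with columns a_j, and let D be a symmetric 'adjacency' relation on {1,…,n}. Define μ(A) as the maximum row index μ such that there exist adjacent i, j with a_{μ,i}·a_{μ,j} < 0 (and 0 if none exists), α(A) as the maximum of |a_{μ(A),i} − a_{μ(A),j}| over adjacent pairs with a_{μ(A),i}·a_{μ(A),j} < 0, and β(A) as the number of such pairs achieving the maximum. The blow-up operation replaces an adjacent pair (i, j) achieving the maximum by appending the column a_i + a_j, making i and j non-adjacent and the new index adjacent to former common neighbors of i and j. Then the triple γ(A) = (μ(A), α(A), β(A)) ∈ ℤ³_{≥0} strictly decreases in lexicographic order under this operation whenever μ(A) > 0; consequently finitely many such operations reach a matrix with μ = 0. -/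
attribute [local instance] Classical.propDecidable

/-- Rows of `A` admitting an adjacent sign-changing pair. -/
noncomputable def scRows {m n : ℕ} (A : Fin m → Fin n → ℤ)
    (D : Fin n → Fin n → Prop) : Finset (Fin m) :=
  Finset.univ.filter fun μ => ∃ i j : Fin n, D i j ∧ A μ i * A μ j < 0

/-- Adjacent sign-changing pairs at row `μ`. -/
noncomputable def scPairs {m n : ℕ} (A : Fin m → Fin n → ℤ)
    (D : Fin n → Fin n → Prop) (μ : Fin m) : Finset (Fin n × Fin n) :=
  Finset.univ.filter fun p => D p.1 p.2 ∧ A μ p.1 * A μ p.2 < 0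

/-- `μ(A)`: the maximal row index (counted from `1`) carrying an adjacent sign-changing
pair, and `0` if there is none. -/
noncomputable def muVal {m n : ℕ} (A : Fin m → Fin n → ℤ)
    (D : Fin n → Fin n → Prop) : ℕ :=
  (scRows A D).sup fun μ => (μ : ℕ) + 1

/-- `α(A)` at the row `μ`: the maximal difference `|a_{μ i} − a_{μ j}|` over adjacent
sign-changing pairs. -/
noncomputable def alphaVal {m n : ℕ} (A : Fin m → Fin n → ℤ)
    (D : Fin n → Fin n → Prop) (μ : Fin m) : ℕ :=
  (scPairs A D μ).sup fun p => (A μ p.1 - A μ p.2).natAbs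

/-- `β(A)` at the row `μ`: the number of adjacent sign-changing pairs achieving `α`. -/
noncomputable def betaVal {m n : ℕ} (A : Fin m → Fin n → ℤ)
    (D : Fin n → Fin n → Prop) (μ : Fin m) : ℕ :=
  ((scPairs A D μ).filter fun p => (A μ p.1 - A μ p.2).natAbs = alphaVal A D μ).card

/-- The invariant `γ(A) = (μ(A), α(A), β(A)) ∈ ℤ³_{≥0}`. -/
noncomputable def gammaVal {m n : ℕ} (A : Fin m → Fin n → ℤ)
    (D : Fin n → Fin n → Prop) : ℕ × ℕ × ℕ :=
  if h : (scRows A D).Nonempty then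
    (muVal A D, alphaVal A D ((scRows A D).max' h), betaVal A D ((scRows A D).max' h))
  else (0, 0, 0)

/-- The blown-up matrix: the column `a_i + a_j` is appended. -/
def blowMat {m n : ℕ} (A : Fin m → Fin n → ℤ) (i j : Fin n) :
    Fin m → Fin (n + 1) → ℤ :=
  fun μ k => if h : (k : ℕ) < n then A μ ⟨k, h⟩ else A μ i + A μ j

/-- The blown-up adjacency: `i` and `j` become non-adjacent, and the new index is adjacent
to `i`, to `j` and to the former common neighbours of `i` and `j`. -/
def blowAdj {n : ℕ} (D : Fin n → Fin n → Prop) (i j : Fin n) :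
    Fin (n + 1) → Fin (n + 1) → Prop := fun k l =>
  if hk : (k : ℕ) < n then
    if hl : (l : ℕ) < n then
      D ⟨k, hk⟩ ⟨l, hl⟩ ∧
        ¬(((⟨k, hk⟩ : Fin n) = i ∧ (⟨l, hl⟩ : Fin n) = j) ∨
          ((⟨k, hk⟩ : Fin n) = j ∧ (⟨l, hl⟩ : Fin n) = i))
    else (⟨k, hk⟩ : Fin n) = i ∨ (⟨k, hk⟩ : Fin n) = j ∨
      (D i ⟨k, hk⟩ ∧ D j ⟨k, hk⟩)
  else
    if hl : (l : ℕ) < n then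
      (⟨l, hl⟩ : Fin n) = i ∨ (⟨l, hl⟩ : Fin n) = j ∨
        (D i ⟨l, hl⟩ ∧ D j ⟨l, hl⟩)
    else False

/-- The blow-up operation performed at an adjacent sign-changing pair `(i, j)` of the
maximal row which achieves the maximal difference `α`. -/
def IsBlowStep {m n : ℕ} (A : Fin m → Fin n → ℤ) (D : Fin n → Fin n → Prop)
    (A' : Fin m → Fin (n + 1) → ℤ) (D' : Fin (n + 1) → Fin (n + 1) → Prop) : Prop :=
  ∃ (h : (scRows A D).Nonempty) (i j : Fin n),
    D i j ∧ A ((scRows A D).max' h) i * A ((scRows A D).max' h) j < 0 ∧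
    (A ((scRows A D).max' h) i - A ((scRows A D).max' h) j).natAbs
      = alphaVal A D ((scRows A D).max' h) ∧
    A' = blowMat A i j ∧ D' = blowAdj D i j

private lemma key1 (x y z : ℤ) (hxy : x*y < 0) (hz : (x+y)*z < 0)
    (hx : x*z < 0 → (x - z).natAbs ≤ (x-y).natAbs)
    (hy : y*z < 0 → (y - z).natAbs ≤ (x-y).natAbs) :
    (x+y-z).natAbs < (x-y).natAbs := by
  rcases mul_neg_iff.mp hxy with ⟨hx0, hy0⟩ | ⟨hx0, hy0⟩ <;>
    rcases mul_neg_iff.mp hz with ⟨hs0, hz0⟩ | ⟨hs0, hz0⟩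
  · have h1 := hx (mul_neg_of_pos_of_neg hx0 hz0)
    clear hx hy hxy hz; omega
  · have h1 := hy (mul_neg_of_neg_of_pos hy0 hz0)
    clear hx hy hxy hz; omega
  · have h1 := hy (mul_neg_of_pos_of_neg hy0 hz0)
    clear hx hy hxy hz; omega
  · have h1 := hx (mul_neg_of_neg_of_pos hx0 hz0)
    clear hx hy hxy hz; omega


section Core
variable {m n : ℕ} (A : Fin m → Fin n → ℤ) (D : Fin n → Fin n → Prop)

lemma mem_scRows {ν : Fin m} : ν ∈ scRows A D ↔ ∃ i j : Fin n, D i j ∧ A ν i * A ν j < 0 := by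
  simp [scRows]

lemma mem_scPairs {μ : Fin m} {p : Fin n × Fin n} :
    p ∈ scPairs A D μ ↔ D p.1 p.2 ∧ A μ p.1 * A μ p.2 < 0 := by
  simp [scPairs]

lemma muVal_eq (h : (scRows A D).Nonempty) :
    muVal A D = ((scRows A D).max' h : ℕ) + 1 := by
  refine le_antisymm (Finset.sup_le fun ν hν => ?_)
    (Finset.le_sup (f := fun μ : Fin m => (μ : ℕ) + 1) ((scRows A D).max'_mem h))
  have := Finset.le_max' _ ν hν
  omega

lemma nonempty_of_muVal_ne_zero (h : muVal A D ≠ 0) : (scRows A D).Nonempty := by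
  by_contra hc
  rw [Finset.not_nonempty_iff_eq_empty] at hc
  exact h (by simp [muVal, hc])

/-- decomposition of blown-up adjacency -/
lemma blowAdj_cases {i j : Fin n} {k l : Fin (n+1)} (hkl : blowAdj D i j k l) :
    (∃ k0 l0 : Fin n, k = k0.castSucc ∧ l = l0.castSucc ∧ D k0 l0 ∧
        ¬(k0 = i ∧ l0 = j) ∧ ¬(k0 = j ∧ l0 = i)) ∨
    (∃ l0 : Fin n, ((k = Fin.last n ∧ l = l0.castSucc) ∨ (l = Fin.last n ∧ k = l0.castSucc)) ∧
        (l0 = i ∨ l0 = j ∨ (D i l0 ∧ D j l0))) := by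
  unfold blowAdj at hkl
  by_cases hk : (k : ℕ) < n <;> by_cases hl : (l : ℕ) < n
  · rw [dif_pos hk, dif_pos hl] at hkl
    refine Or.inl ⟨⟨k, hk⟩, ⟨l, hl⟩, by ext; simp, by ext; simp, hkl.1, ?_, ?_⟩ <;>
      intro hc <;> exact hkl.2 (by tauto)
  · rw [dif_pos hk, dif_neg hl] at hkl
    have hln : l = Fin.last n := by ext; have := l.isLt; simp; omega
    exact Or.inr ⟨⟨k, hk⟩, Or.inr ⟨hln, by ext; simp⟩, hkl⟩
  · rw [dif_neg hk, dif_pos hl] at hkl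
    have hkn : k = Fin.last n := by ext; have := k.isLt; simp; omega
    exact Or.inr ⟨⟨l, hl⟩, Or.inl ⟨hkn, by ext; simp⟩, hkl⟩
  · rw [dif_neg hk, dif_neg hl] at hkl
    exact absurd hkl not_false

lemma blowMat_castSucc (i j : Fin n) (ν : Fin m) (k : Fin n) :
    blowMat A i j ν k.castSucc = A ν k := by
  simp [blowMat]

lemma blowMat_last (i j : Fin n) (ν : Fin m) :
    blowMat A i j ν (Fin.last n) = A ν i + A ν j := by
  simp [blowMat]

end Core

lemma blow_decreases {m n : ℕ} (A : Fin m → Fin n → ℤ) (D : Fin n → Fin n → Prop)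
    (A' : Fin m → Fin (n + 1) → ℤ) (D' : Fin (n + 1) → Fin (n + 1) → Prop)
    (hstep : IsBlowStep A D A' D') :
    toLex ((gammaVal A' D').1, toLex ((gammaVal A' D').2.1, (gammaVal A' D').2.2))
      < toLex ((gammaVal A D).1, toLex ((gammaVal A D).2.1, (gammaVal A D).2.2)) := by
  obtain ⟨h, i, j, hDij, hij, hα, rfl, rfl⟩ := hstep
  set μ := (scRows A D).max' h with hμdef
  have hsupA : ∀ k l : Fin n, D k l → A μ k * A μ l < 0 →
      (A μ k - A μ l).natAbs ≤ alphaVal A D μ := fun k l h1 h2 =>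
    Finset.le_sup (f := fun p : Fin n × Fin n => (A μ p.1 - A μ p.2).natAbs)
      ((mem_scPairs A D (p := (k, l))).mpr ⟨h1, h2⟩)
  have habove : ∀ ν : Fin m, ν ∉ scRows A D → ∀ k l : Fin n, D k l → 0 ≤ A ν k * A ν l := by
    intro ν hν k l hkl
    by_contra hc
    push_neg at hc
    exact hν ((mem_scRows A D).mpr ⟨k, l, hkl, hc⟩)
  have hsub : ∀ ν ∈ scRows (blowMat A i j) (blowAdj D i j), ν ≤ μ := by
    intro ν hν
    by_contra hlt
    push_neg at hlt
    have hνold : ν ∉ scRows A D := fun hm => absurd (Finset.le_max' _ ν hm) (not_le.mpr hlt)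
    obtain ⟨k, l, hkl, hprod⟩ := (mem_scRows _ _).mp hν
    have hnn := habove ν hνold
    rcases blowAdj_cases D hkl with ⟨k0, l0, hk, hl, hD0, -, -⟩ | ⟨l0, hor, hl0⟩
    · rw [hk, hl, blowMat_castSucc, blowMat_castSucc] at hprod
      exact absurd (hnn k0 l0 hD0) (not_le.mpr hprod)
    · have hvals : (A ν i + A ν j) * A ν l0 < 0 := by
        rcases hor with ⟨h1, h2⟩ | ⟨h1, h2⟩
        · rw [h1, h2, blowMat_last, blowMat_castSucc] at hprod; exact hprod
        · rw [h1, h2, blowMat_last, blowMat_castSucc, mul_comm] at hprod; exact hprod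
      have h1 := hnn i j hDij
      rcases hl0 with rfl | rfl | ⟨hd1, hd2⟩
      · nlinarith [mul_self_nonneg (A ν l0)]
      · nlinarith [mul_self_nonneg (A ν l0)]
      · have h2 := hnn i l0 hd1
        have h3 := hnn j l0 hd2
        nlinarith
  have hnewlt : ∀ l0 : Fin n, (l0 = i ∨ l0 = j ∨ (D i l0 ∧ D j l0)) →
      (A μ i + A μ j) * A μ l0 < 0 →
      ((A μ i + A μ j) - A μ l0).natAbs < alphaVal A D μ := by
    intro l0 hl0 hp
    have hlt : ((A μ i + A μ j) - A μ l0).natAbs < (A μ i - A μ j).natAbs := by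
      apply key1 _ _ _ hij hp
      · intro hx
        rcases hl0 with rfl | rfl | ⟨hd1, hd2⟩
        · exact absurd hx (not_lt.mpr (mul_self_nonneg _))
        · exact le_refl _
        · rw [hα]; exact hsupA i l0 hd1 hx
      · intro hy
        rcases hl0 with rfl | rfl | ⟨hd1, hd2⟩
        · omega
        · exact absurd hy (not_lt.mpr (mul_self_nonneg _))
        · rw [hα]; exact hsupA j l0 hd2 hy
    omega
  have hC : ∀ p ∈ scPairs (blowMat A i j) (blowAdj D i j) μ,
      ((blowMat A i j μ p.1 - blowMat A i j μ p.2).natAbs < alphaVal A D μ) ∨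
      (∃ q : Fin n × Fin n, q ∈ scPairs A D μ ∧ q ≠ (i, j) ∧
        p = (q.1.castSucc, q.2.castSucc) ∧
        (blowMat A i j μ p.1 - blowMat A i j μ p.2).natAbs
          = (A μ q.1 - A μ q.2).natAbs) := by
    intro p hp
    obtain ⟨hadj, hprod⟩ := (mem_scPairs _ _).mp hp
    rcases blowAdj_cases D hadj with ⟨k0, l0, hk, hl, hD0, hne, -⟩ | ⟨l0, hor, hl0⟩
    · right
      refine ⟨(k0, l0), ?_, ?_, ?_, ?_⟩
      · rw [mem_scPairs]
        rw [hk, hl, blowMat_castSucc, blowMat_castSucc] at hprod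
        exact ⟨hD0, hprod⟩
      · intro hc
        rw [Prod.mk.injEq] at hc
        exact hne hc
      · exact Prod.ext hk hl
      · rw [hk, hl, blowMat_castSucc, blowMat_castSucc]
    · left
      rcases hor with ⟨h1, h2⟩ | ⟨h1, h2⟩
      · rw [h1, h2, blowMat_last, blowMat_castSucc] at hprod ⊢
        exact hnewlt l0 hl0 hprod
      · rw [h1, h2, blowMat_last, blowMat_castSucc, mul_comm] at hprod
        rw [h1, h2, blowMat_last, blowMat_castSucc]
        have := hnewlt l0 hl0 hprod
        omega
  have hαle : alphaVal (blowMat A i j) (blowAdj D i j) μ ≤ alphaVal A D μ := by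
    apply Finset.sup_le
    intro p hp
    rcases hC p hp with hlt | ⟨q, hq, -, -, he⟩
    · exact hlt.le
    · rw [he]
      exact Finset.le_sup (f := fun q : Fin n × Fin n => (A μ q.1 - A μ q.2).natAbs) hq
  by_cases h' : (scRows (blowMat A i j) (blowAdj D i j)).Nonempty
  · have hνμ : (scRows (blowMat A i j) (blowAdj D i j)).max' h' ≤ μ :=
      hsub _ (Finset.max'_mem _ h')
    rw [gammaVal, dif_pos h', gammaVal, dif_pos h]
    simp only
    rw [Prod.Lex.lt_iff]; simp only [ofLex_toLex]
    rcases lt_or_eq_of_le hνμ with hlt | heq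
    · left
      rw [muVal_eq _ _ h', muVal_eq A D h]
      have : ((scRows (blowMat A i j) (blowAdj D i j)).max' h' : ℕ) < (μ : ℕ) := hlt
      omega
    · right
      constructor
      · rw [muVal_eq _ _ h', muVal_eq A D h, heq]
      rw [Prod.Lex.lt_iff]
      simp only [ofLex_toLex]
      rw [heq]
      rcases lt_or_eq_of_le hαle with h2 | h2
      · exact Or.inl h2
      right
      refine ⟨h2, ?_⟩
      -- beta decreases
      have hmemT : (i, j) ∈ (scPairs A D μ).filter
          (fun p => (A μ p.1 - A μ p.2).natAbs = alphaVal A D μ) := by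
        rw [Finset.mem_filter]
        exact ⟨(mem_scPairs A D).mpr ⟨hDij, hij⟩, hα⟩
      rw [betaVal, betaVal]
      apply lt_of_le_of_lt _ (Finset.card_erase_lt_of_mem hmemT)
      apply Finset.card_le_card_of_injOn
        (fun p => ((if hh : (p.1 : ℕ) < n then (⟨p.1, hh⟩ : Fin n) else i),
                   (if hh : (p.2 : ℕ) < n then (⟨p.2, hh⟩ : Fin n) else i)))
      · intro p hp
        simp only [Finset.mem_coe, Finset.mem_filter] at hp
        obtain ⟨hp1, hp2⟩ := hp
        rcases hC p hp1 with hlt | ⟨q, hq, hqne, hpq, he⟩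
        · rw [hp2, h2] at hlt
          exact absurd hlt (lt_irrefl _)
        · subst hpq
          simp only [Finset.mem_coe, Fin.coe_castSucc, Fin.is_lt, dif_pos, Fin.eta]
          rw [Finset.mem_erase]
          refine ⟨hqne, Finset.mem_filter.mpr ⟨hq, ?_⟩⟩
          rw [← h2, ← he]
          exact hp2
      · intro p1 hp1 p2 hp2 hfe
        simp only [Finset.mem_coe, Finset.mem_filter] at hp1 hp2
        obtain ⟨hp11, hp12⟩ := hp1
        obtain ⟨hp21, hp22⟩ := hp2
        rcases hC p1 hp11 with hlt | ⟨q, hq, hqne, hpq1, he1⟩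
        · rw [hp12, h2] at hlt
          exact absurd hlt (lt_irrefl _)
        rcases hC p2 hp21 with hlt | ⟨r, hr, hrne, hpq2, he2⟩
        · rw [hp22, h2] at hlt
          exact absurd hlt (lt_irrefl _)
        subst hpq1; subst hpq2
        simp only [Fin.coe_castSucc, Fin.is_lt, dif_pos, Fin.eta, Prod.mk.injEq] at hfe
        rw [Prod.mk.injEq]
        exact ⟨congrArg Fin.castSucc hfe.1, congrArg Fin.castSucc hfe.2⟩
  · rw [gammaVal, dif_neg h', gammaVal, dif_pos h]
    simp only
    rw [Prod.Lex.lt_iff]; simp only [ofLex_toLex]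
    left
    rw [muVal_eq A D h]
    omega


/-- (1) The invariant `γ = (μ, α, β)` strictly decreases in lexicographic order under an
admissible blow-up performed whenever `μ > 0` (`μ > 0` is equivalent to `scRows` being
nonempty); consequently (2) finitely many such operations reach a configuration with
`μ = 0`. -/
theorem stmt10 :
    (∀ (m n : ℕ) (A : Fin m → Fin n → ℤ) (D : Fin n → Fin n → Prop),
      Symmetric D → (∀ k, ¬ D k k) →
      ∀ (A' : Fin m → Fin (n + 1) → ℤ) (D' : Fin (n + 1) → Fin (n + 1) → Prop),
        IsBlowStep A D A' D' →
        toLex ((gammaVal A' D').1, toLex ((gammaVal A' D').2.1, (gammaVal A' D').2.2))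
          < toLex ((gammaVal A D).1, toLex ((gammaVal A D).2.1, (gammaVal A D).2.2))) ∧
    (∀ (m n : ℕ) (A : (k : ℕ) → Fin m → Fin (n + k) → ℤ)
        (D : (k : ℕ) → Fin (n + k) → Fin (n + k) → Prop),
      (∀ k, Symmetric (D k)) → (∀ k l, ¬ D k l l) →
      (∀ k, muVal (A k) (D k) ≠ 0 → IsBlowStep (A k) (D k) (A (k + 1)) (D (k + 1))) →
      ∃ k, muVal (A k) (D k) = 0) := by
  constructor
  · intro m n A D _ _ A' D' hstep
    exact blow_decreases A D A' D' hstep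
  · intro m n A D hsym hirr hb
    by_contra hc
    push_neg at hc
    have hstep : ∀ k, IsBlowStep (A k) (D k) (A (k + 1)) (D (k + 1)) :=
      fun k => hb k (hc k)
    set g : ℕ → (ℕ ×ₗ ℕ ×ₗ ℕ) := fun k =>
      toLex ((gammaVal (A k) (D k)).1,
        toLex ((gammaVal (A k) (D k)).2.1, (gammaVal (A k) (D k)).2.2)) with hg
    have hdec : ∀ k, g (k + 1) < g k := fun k =>
      blow_decreases (A k) (D k) (A (k + 1)) (D (k + 1)) (hstep k)
    exact (RelEmbedding.natGT g hdec).not_wellFounded wellFounded_lt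
end

section
/- Let Γ be a finitely generated group with generators x₁, …, x_m, L a non-archimedean local field with valuation v, and ρ: Γ → GL_N(L) a representation of block upper-triangular form ρ = [[ρ₁, h₁₂, …],[0, ρ₂, …],…,[0,…,ρ_n]] with n diagonal blocks, where each diagonal block ρ_i takes values in GL_{N_i}(O_L) (matrices with non-negative valuation entries). Then ρ is bounded: for every γ ∈ Γ, every entry of ρ(γ) has valuation at least (n−1)·C, where C ≤ 0 is the minimum valuation of the entries of the off-diagonal blocks h_{ij}(x_k) over all generators x_k. -/
/-- Let `Γ` be a group generated (as a monoid) by `x 0, …, x (m-1)`, `L` a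
non-archimedean valued field with (multiplicative) valuation `w`, and
`ρ : Γ → GL_N(L)` a representation in block upper-triangular form (with respect to a block
structure `b : Fin N → Fin n` with `n` blocks): entries below the diagonal blocks vanish,
and the diagonal blocks take values in the valuation ring (`w ≤ 1`).  If `c ≥ 1` bounds
the valuations of all entries of the generators (in particular of the off-diagonal
blocks), then `ρ` is bounded: every entry of every `ρ γ` has valuation at most
`c ^ (n − 1)`.  (Multiplicatively, `w ≤ c ^ (n-1)` is the additive statement
"valuation at least `(n−1)·C`".) -/
theorem stmt14 {Γ : Type*} [Group Γ] {m : ℕ} (x : Fin m → Γ)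
    (hgen : ∀ γ : Γ, γ ∈ Submonoid.closure (Set.range x))
    {L : Type*} [Field L] (w : Valuation L NNReal)
    {N n : ℕ} (ρ : Γ →* GL (Fin N) L) (b : Fin N → Fin n)
    (htri : ∀ γ : Γ, Matrix.BlockTriangular (ρ γ : Matrix (Fin N) (Fin N) L) b)
    (hdiag : ∀ (γ : Γ) (i j : Fin N), b i = b j →
      w ((ρ γ : Matrix (Fin N) (Fin N) L) i j) ≤ 1)
    (c : NNReal) (hc : 1 ≤ c)
    (hgenbound : ∀ (k : Fin m) (i j : Fin N),
      w ((ρ (x k) : Matrix (Fin N) (Fin N) L) i j) ≤ c) :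
    ∀ (γ : Γ) (i j : Fin N),
      w ((ρ γ : Matrix (Fin N) (Fin N) L) i j) ≤ c ^ (n - 1) := by
  have key : ∀ γ : Γ, ∀ i j : Fin N,
      w ((ρ γ : Matrix (Fin N) (Fin N) L) i j) ≤ c ^ ((b j : ℕ) - (b i : ℕ)) := by
    intro γ
    induction hgen γ using Submonoid.closure_induction with
    | mem g hg =>
      obtain ⟨k, rfl⟩ := hg
      intro i j
      rcases lt_trichotomy (b i) (b j) with h | h | h
      · calc w ((ρ (x k) : Matrix (Fin N) (Fin N) L) i j) ≤ c := hgenbound k i j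
          _ = c ^ 1 := (pow_one c).symm
          _ ≤ c ^ ((b j : ℕ) - (b i : ℕ)) := by
              apply pow_le_pow_right₀ hc
              omega
      · calc w ((ρ (x k) : Matrix (Fin N) (Fin N) L) i j) ≤ 1 := hdiag _ i j h
          _ ≤ c ^ ((b j : ℕ) - (b i : ℕ)) := one_le_pow_of_one_le' hc _
      · rw [htri (x k) h]
        simp
    | one =>
      intro i j
      have : ((ρ 1 : GL (Fin N) L) : Matrix (Fin N) (Fin N) L) = 1 := by
        simp
      rw [this]
      rcases eq_or_ne i j with rfl | hij
      · simpa using le_trans (le_of_eq (by simp)) (one_le_pow_of_one_le' hc _)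
      · simp [Matrix.one_apply_ne hij]
    | mul g h _ _ ihg ihh =>
      intro i j
      have hm : ((ρ (g * h) : GL (Fin N) L) : Matrix (Fin N) (Fin N) L)
          = ((ρ g : GL (Fin N) L) : Matrix (Fin N) (Fin N) L)
            * ((ρ h : GL (Fin N) L) : Matrix (Fin N) (Fin N) L) := by
        simp [map_mul]
      rw [hm, Matrix.mul_apply]
      apply Valuation.map_sum_le
      intro k _
      rcases lt_or_ge (b k) (b i) with hki | hik
      · rw [htri g hki]; simp
      rcases lt_or_ge (b j) (b k) with hjk | hkj
      · rw [htri h hjk]; simp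
      · calc w (((ρ g : GL (Fin N) L) : Matrix (Fin N) (Fin N) L) i k
              * ((ρ h : GL (Fin N) L) : Matrix (Fin N) (Fin N) L) k j)
            = w _ * w _ := w.map_mul _ _
          _ ≤ c ^ ((b k : ℕ) - (b i : ℕ)) * c ^ ((b j : ℕ) - (b k : ℕ)) :=
              mul_le_mul' (ihg i k) (ihh k j)
          _ = c ^ (((b k : ℕ) - (b i : ℕ)) + ((b j : ℕ) - (b k : ℕ))) := (pow_add c _ _).symm
          _ = c ^ ((b j : ℕ) - (b i : ℕ)) := by
              congr 1
              have := hik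
              have := hkj
              omega
  intro γ i j
  refine le_trans (key γ i j) (pow_le_pow_right₀ hc ?_)
  have := (b j).isLt
  omega
end
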